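/- The number of maximal chains in the poset Φₙ equals the number of n × n alternating sign matrices. -/
import Mathlib


/-- A sequence of integers is *alternating* when each entry lies in `{-1,0,1}` and
the nonzero entries, read in order, form the pattern `1, -1, 1, …, -1, 1`
(alternating in sign, starting and ending with `1`). -/
def IsAlternating (n : ℕ) (α : Fin n → ℤ) : Prop :=
  (∀ i, α i = -1 ∨ α i = 0 ∨ α i = 1) ∧
  (∃ i, α i ≠ 0) ∧
  (∀ i, α i ≠ 0 → (∀ j, j < i → α j = 0) → α i = 1) ∧
  (∀ i, α i ≠ 0 → (∀ j, i < j → α j = 0) → α i = 1) ∧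
  (∀ i j, i < j → α i ≠ 0 → α j ≠ 0 → (∀ k, i < k → k < j → α k = 0) → α j = -α i)

/-- Vertices of the poset Φₙ: elements of {0,1}ⁿ. -/
def Vertex (n : ℕ) := {x : Fin n → ℤ // ∀ i, x i = 0 ∨ x i = 1}

/-- In Φₙ, y covers x when y - x is an alternating sequence. -/
def Covers (n : ℕ) (x y : Vertex n) : Prop :=
  IsAlternating n (fun i => y.1 i - x.1 i)

/-- An *alternating sign matrix*: every row and column is alternating. -/
def IsASM (n : ℕ) (A : Matrix (Fin n) (Fin n) ℤ) : Prop :=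
  (∀ i, IsAlternating n (fun j => A i j)) ∧ (∀ j, IsAlternating n (fun i => A i j))

/-- A maximal chain in Φₙ: each element covers the previous, the first element is
minimal and the last is maximal (in the order generated by the covering relation). -/
def MaxChain (n : ℕ) :=
  {x : Fin (n+1) → Vertex n //
    (∀ i : Fin n, Covers n (x i.castSucc) (x i.succ)) ∧
    (∀ y : Vertex n, ¬ Relation.TransGen (Covers n) y (x 0)) ∧
    (∀ y : Vertex n, ¬ Relation.TransGen (Covers n) (x (Fin.last n)) y)}

def psum {n : ℕ} (α : Fin n → ℤ) (k : ℕ) : ℤ :=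
  ∑ i ∈ Finset.univ.filter (fun i : Fin n => (i : ℕ) < k), α i

lemma psum_zero {n : ℕ} (α : Fin n → ℤ) : psum α 0 = 0 := by
  simp [psum]

lemma psum_succ {n : ℕ} (α : Fin n → ℤ) {k : ℕ} (hk : k < n) :
    psum α (k + 1) = psum α k + α ⟨k, hk⟩ := by
  unfold psum
  have : Finset.univ.filter (fun i : Fin n => (i : ℕ) < k + 1)
      = insert ⟨k, hk⟩ (Finset.univ.filter (fun i : Fin n => (i : ℕ) < k)) := by
    ext i
    simp only [Finset.mem_filter, Finset.mem_univ, true_and, Finset.mem_insert, Fin.ext_iff]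
    omega
  rw [this, Finset.sum_insert (by simp)]
  ring

lemma psum_top {n : ℕ} (α : Fin n → ℤ) : psum α n = ∑ i, α i := by
  unfold psum
  congr 1
  ext i
  simp [i.isLt]

lemma psum_eq_of_zeros {n : ℕ} (α : Fin n → ℤ) {a b : ℕ} (hab : a ≤ b) (hb : b ≤ n)
    (h : ∀ l : Fin n, a ≤ (l : ℕ) → (l : ℕ) < b → α l = 0) : psum α b = psum α a := by
  induction b, hab using Nat.le_induction with
  | base => rfl
  | succ b hb' ih =>
    have hbn : b < n := by omega
    rw [psum_succ α hbn, ih (by omega) (fun l h1 h2 => h l h1 (by omega)),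
      h ⟨b, hbn⟩ (by simpa using hb') (by simp), add_zero]

lemma alt_iff {n : ℕ} (α : Fin n → ℤ) :
    IsAlternating n α ↔ ((∀ k, k ≤ n → psum α k = 0 ∨ psum α k = 1) ∧ psum α n = 1) := by
  constructor
  · rintro ⟨h1, h2, h3, h4, h5⟩
    have Q : ∀ k, k ≤ n →
        ((psum α k = 1 ∧ ∃ j : Fin n, (j : ℕ) < k ∧ α j = 1 ∧
            ∀ l : Fin n, j < l → (l : ℕ) < k → α l = 0) ∨
         (psum α k = 0 ∧ ((∀ j : Fin n, (j : ℕ) < k → α j = 0) ∨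
            ∃ j : Fin n, (j : ℕ) < k ∧ α j = -1 ∧
              ∀ l : Fin n, j < l → (l : ℕ) < k → α l = 0))) := by
      intro k hk
      induction k with
      | zero => exact Or.inr ⟨psum_zero α, Or.inl (by omega)⟩
      | succ k ih =>
        have hkn : k < n := by omega
        have ihk := ih (by omega)
        set a := α ⟨k, hkn⟩ with ha
        have hps := psum_succ α hkn
        by_cases haz : a = 0
        · rcases ihk with ⟨hs, j, hj, hj1, hjl⟩ | ⟨hs, hz⟩
          · left
            refine ⟨by rw [hps, ← ha, haz, add_zero, hs], j, by omega, hj1, ?_⟩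
            intro l hl hl2
            by_cases hlk : (l : ℕ) = k
            · have : l = ⟨k, hkn⟩ := Fin.ext hlk
              rw [this, ← ha, haz]
            · exact hjl l hl (by omega)
          · right
            refine ⟨by rw [hps, ← ha, haz, add_zero, hs], ?_⟩
            rcases hz with hz | ⟨j, hj, hj1, hjl⟩
            · left
              intro j hj
              by_cases hlk : (j : ℕ) = k
              · have : j = ⟨k, hkn⟩ := Fin.ext hlk
                rw [this, ← ha, haz]
              · exact hz j (by omega)
            · right
              refine ⟨j, by omega, hj1, ?_⟩
              intro l hl hl2
              by_cases hlk : (l : ℕ) = k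
              · have : l = ⟨k, hkn⟩ := Fin.ext hlk
                rw [this, ← ha, haz]
              · exact hjl l hl (by omega)
        · rcases ihk with ⟨hs, j, hj, hj1, hjl⟩ | ⟨hs, hz⟩
          · -- last nonzero was +1, so a = -1
            have hja : a = -1 := by
              have := h5 j ⟨k, hkn⟩ (by simp [Fin.lt_def]; omega) (by rw [hj1]; norm_num)
                haz (fun m hm1 hm2 => hjl m hm1 (by simpa [Fin.lt_def] using hm2))
              rw [← ha] at this
              rw [this, hj1]
            right
            refine ⟨by rw [hps, hs, ← ha, hja]; ring, Or.inr ⟨⟨k, hkn⟩, by simp, by rw [← ha, hja], ?_⟩⟩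
            intro l hl hl2
            simp [Fin.lt_def] at hl
            omega
          · have hja : a = 1 := by
              rcases hz with hz | ⟨j, hj, hj1, hjl⟩
              · exact h3 ⟨k, hkn⟩ haz (fun m hm => hz m (by simpa [Fin.lt_def] using hm))
              · have := h5 j ⟨k, hkn⟩ (by simp [Fin.lt_def]; omega) (by rw [hj1]; norm_num)
                  haz (fun m hm1 hm2 => hjl m hm1 (by simpa [Fin.lt_def] using hm2))
                rw [← ha] at this
                rw [this, hj1]
                ring
            left
            refine ⟨by rw [hps, hs, ← ha, hja]; ring, ⟨k, hkn⟩, by simp, by rw [← ha]; exact hja, ?_⟩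
            intro l hl hl2
            simp [Fin.lt_def] at hl
            omega
    constructor
    · intro k hk
      rcases Q k hk with ⟨hs, _⟩ | ⟨hs, _⟩ <;> simp [hs]
    · rcases Q n le_rfl with ⟨hs, _⟩ | ⟨hs, hz⟩
      · exact hs
      · exfalso
        rcases hz with hz | ⟨j, hj, hj1, hjl⟩
        · obtain ⟨i, hi⟩ := h2
          exact hi (hz i i.isLt)
        · have := h4 j (by rw [hj1]; norm_num) (fun l hl => hjl l hl l.isLt)
          rw [hj1] at this
          norm_num at this
  · rintro ⟨hS, hT⟩
    have hent : ∀ i : Fin n, α i = -1 ∨ α i = 0 ∨ α i = 1 := by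
      intro i
      have h1 := hS i (le_of_lt i.isLt)
      have h2 := hS ((i : ℕ) + 1) i.isLt
      have h3 := psum_succ α i.isLt
      rw [Fin.eta] at h3
      omega
    refine ⟨hent, ?_, ?_, ?_, ?_⟩
    · by_contra h
      push_neg at h
      have := psum_eq_of_zeros α (Nat.zero_le n) le_rfl (fun l _ _ => h l)
      rw [psum_zero] at this
      omega
    · intro i hi hz
      have h0 : psum α i = 0 := by
        rw [psum_eq_of_zeros α (Nat.zero_le _) (le_of_lt i.isLt)
          (fun l _ hl => hz l (Fin.lt_def.mpr hl)), psum_zero]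
      have h3 := psum_succ α i.isLt
      rw [Fin.eta] at h3
      have h2 := hS ((i : ℕ) + 1) i.isLt
      have := hent i
      omega
    · intro i hi hz
      have h0 : psum α n = psum α ((i : ℕ) + 1) := by
        refine psum_eq_of_zeros α i.isLt le_rfl ?_
        intro l hl _
        exact hz l (Fin.lt_def.mpr hl)
      have h3 := psum_succ α i.isLt
      rw [Fin.eta] at h3
      have h1 := hS i (le_of_lt i.isLt)
      have := hent i
      omega
    · intro i j hij hi hj hz
      have h0 : psum α (j : ℕ) = psum α ((i : ℕ) + 1) := by
        refine psum_eq_of_zeros α (Fin.lt_def.mp hij) (le_of_lt j.isLt) ?_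
        intro l hl1 hl2
        exact hz l (Fin.lt_def.mpr (by omega)) (Fin.lt_def.mpr hl2)
      have h3 := psum_succ α i.isLt
      have h4 := psum_succ α j.isLt
      rw [Fin.eta] at h3 h4
      have h5 := hS i (le_of_lt i.isLt)
      have h6 := hS ((i : ℕ) + 1) i.isLt
      have h7 := hS j (le_of_lt j.isLt)
      have h8 := hS ((j : ℕ) + 1) j.isLt
      have e1 := hent i
      have e2 := hent j
      omega

lemma covers_sum {n : ℕ} {x y : Vertex n} (h : Covers n x y) :
    (∑ j, y.1 j) = (∑ j, x.1 j) + 1 := by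
  have := ((alt_iff _).mp h).2
  rw [psum_top] at this
  rw [Finset.sum_sub_distrib] at this
  omega

lemma transGen_sum {n : ℕ} {x y : Vertex n} (h : Relation.TransGen (Covers n) x y) :
    (∑ j, x.1 j) + 1 ≤ ∑ j, y.1 j := by
  induction h with
  | single h => exact le_of_eq (covers_sum h).symm
  | tail h1 h2 ih => have := covers_sum h2; omega

lemma indicator_alt {n : ℕ} (j : Fin n) :
    IsAlternating n (fun i => if i = j then 1 else 0) := by
  refine ⟨fun i => ?_, ⟨j, by simp⟩, fun i hi _ => ?_, fun i hi _ => ?_, fun i k hik hi hk _ => ?_⟩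
  · by_cases h : i = j <;> simp [h]
  · by_cases h : i = j <;> simp [h] at hi ⊢
  · by_cases h : i = j <;> simp [h] at hi ⊢
  · by_cases h : i = j <;> by_cases h' : k = j <;> simp [h, h'] at hi hk ⊢
    subst h h'
    exact absurd hik (lt_irrefl _)

lemma chain_bot {n : ℕ} (c : MaxChain n) : ∀ j, (c.1 0).1 j = 0 := by
  intro j
  rcases (c.1 0).2 j with h | h
  · exact h
  · exfalso
    set x0 := c.1 0 with hx0
    refine c.2.2.1 ⟨fun i => if i = j then 0 else x0.1 i, fun i => ?_⟩ (Relation.TransGen.single ?_)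
    · by_cases hij : i = j
      · simp [hij]
      · simpa [hij] using x0.2 i
    · show IsAlternating n _
      have : (fun i => x0.1 i - (if i = j then 0 else x0.1 i)) = fun i => if i = j then 1 else 0 := by
        funext i
        by_cases hij : i = j <;> simp [hij, h]
      rw [this]
      exact indicator_alt j

lemma chain_top {n : ℕ} (c : MaxChain n) : ∀ j, (c.1 (Fin.last n)).1 j = 1 := by
  intro j
  rcases (c.1 (Fin.last n)).2 j with h | h
  · exfalso
    set x1 := c.1 (Fin.last n) with hx1
    refine c.2.2.2 ⟨fun i => if i = j then 1 else x1.1 i, fun i => ?_⟩ (Relation.TransGen.single ?_)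
    · by_cases hij : i = j
      · simp [hij]
      · simpa [hij] using x1.2 i
    · show IsAlternating n _
      have : (fun i => (if i = j then 1 else x1.1 i) - x1.1 i) = fun i => if i = j then 1 else 0 := by
        funext i
        by_cases hij : i = j <;> simp [hij, h]
      rw [this]
      exact indicator_alt j
  · exact h

lemma tele {n : ℕ} (x : Fin (n+1) → Vertex n) (j : Fin n) :
    ∀ k (hk : k ≤ n),
      psum (fun i : Fin n => (x i.succ).1 j - (x i.castSucc).1 j) k
        = (x ⟨k, by omega⟩).1 j - (x 0).1 j := by
  intro k
  induction k with
  | zero => intro _; simp [psum_zero]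
  | succ k ih =>
    intro hk
    have hkn : k < n := by omega
    rw [psum_succ _ hkn, ih (by omega)]
    have h1 : (⟨k, hkn⟩ : Fin n).succ = (⟨k + 1, by omega⟩ : Fin (n+1)) := rfl
    have h2 : (⟨k, hkn⟩ : Fin n).castSucc = (⟨k, by omega⟩ : Fin (n+1)) := rfl
    rw [h1, h2]
    ring

def theEquiv (n : ℕ) : MaxChain n ≃ {A : Matrix (Fin n) (Fin n) ℤ // IsASM n A} where
  toFun c := ⟨fun i j => (c.1 i.succ).1 j - (c.1 i.castSucc).1 j, by
    constructor
    · intro i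
      exact c.2.1 i
    · intro j
      rw [alt_iff]
      constructor
      · intro k hk
        rw [tele c.1 j k hk, chain_bot c j, sub_zero]
        exact (c.1 ⟨k, by omega⟩).2 j
      · rw [tele c.1 j n le_rfl, chain_bot c j, sub_zero]
        have : (⟨n, by omega⟩ : Fin (n+1)) = Fin.last n := rfl
        rw [this, chain_top c j]⟩
  invFun A := ⟨fun k => ⟨fun j => psum (fun i => A.1 i j) k.val, by
      intro j
      exact ((alt_iff _).mp (A.2.2 j)).1 k.val (by omega)⟩, by
    refine ⟨?_, ?_, ?_⟩
    · intro i
      show IsAlternating n _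
      have : (fun j => psum (fun i' => A.1 i' j) (i.succ : Fin (n+1)).val
            - psum (fun i' => A.1 i' j) (i.castSucc : Fin (n+1)).val)
          = fun j => A.1 i j := by
        funext j
        have h1 : (i.succ : Fin (n+1)).val = i.val + 1 := rfl
        have h2 : (i.castSucc : Fin (n+1)).val = i.val := rfl
        rw [h1, h2, psum_succ _ i.isLt, Fin.eta]
        ring
      rw [this]
      exact A.2.1 i
    · intro y h
      have hsum := transGen_sum h
      have h0 : (∑ j, psum (fun i => A.1 i j) ((0 : Fin (n+1)) : ℕ)) = 0 := by
        simp [psum_zero]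
      have hy : (0 : ℤ) ≤ ∑ j, y.1 j :=
        Finset.sum_nonneg fun j _ => by rcases y.2 j with h | h <;> simp [h]
      rw [h0] at hsum
      omega
    · intro y h
      have hsum := transGen_sum h
      have h0 : (∑ j, psum (fun i => A.1 i j) ((Fin.last n : Fin (n+1)) : ℕ)) = n := by
        have : ∀ j : Fin n, psum (fun i => A.1 i j) n = 1 := fun j => ((alt_iff _).mp (A.2.2 j)).2
        simp [Fin.val_last, this]
      have hy : (∑ j, y.1 j) ≤ ∑ j : Fin n, (1 : ℤ) :=
        Finset.sum_le_sum fun j _ => by rcases y.2 j with h | h <;> simp [h]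
      simp at hy
      rw [h0] at hsum
      omega⟩
  left_inv c := by
    apply Subtype.ext
    funext k
    apply Subtype.ext
    funext j
    show psum (fun i : Fin n => (c.1 i.succ).1 j - (c.1 i.castSucc).1 j) k.val = (c.1 k).1 j
    rw [tele c.1 j k.val (by omega), chain_bot c j, sub_zero, Fin.eta]
  right_inv A := by
    apply Subtype.ext
    funext i j
    show psum (fun i' => A.1 i' j) (i.succ : Fin (n+1)).val
        - psum (fun i' => A.1 i' j) (i.castSucc : Fin (n+1)).val = A.1 i j
    have h1 : (i.succ : Fin (n+1)).val = i.val + 1 := rfl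
    have h2 : (i.castSucc : Fin (n+1)).val = i.val := rfl
    rw [h1, h2, psum_succ _ i.isLt, Fin.eta]
    ring

/-- The number of maximal chains of Φₙ equals the number of n × n alternating sign
matrices. -/
theorem card_chains_eq_card_asms (n : ℕ) :
    Nat.card (MaxChain n) = Nat.card {A : Matrix (Fin n) (Fin n) ℤ // IsASM n A} := by
  exact Nat.card_congr (theEquiv n)
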